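/- Let U be a unitary operator that finitely propagates with constant b > 0 with respect to a nonnegative self-adjoint operator A, and let δ > 0. Define Λ(r) := Σ_{n=1}^∞ δnb·1_{[(n−1)b, nb)}(r) for r ≥ 0. Then for any R > 0, the operator e^{Λ(A)}[U, E_A([R,∞))] is bounded with operator norm at most e^{δ⌈R+b⌉_b} + e^{δ⌈R⌉_b}, where ⌈x⌉_b := b·min{n ∈ ℕ : x ≤ nb}. -/

import Mathlib

/-!
Because `A ≥ 0`, `E_A([0,R)) + E_A([R,∞)) = 1`, and the commutator `U P - P U` with
`P = E_A([R,∞))`, `Q = E_A([0,R))` equals `Q U P - P U Q`. The first vector lies in the spectral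
subspace of `[0,R)`, and by finite propagation the second lies in that of `[R, R+b)`.
On a vector supported in `[0,R')` the operator `e^{Λ_N(A)}` is an orthogonal sum of multiples
`e^{δnb}` of spectral projections with `(n-1)b < R'`, so by Pythagoras it has norm at most
`e^{δ⌈R'⌉_b}` there.
-/

noncomputable section

/-- A projection-valued measure on subsets of `α`, acting on a complex Hilbert space `H`. -/
structure PVM (α : Type*) (H : Type*) [NormedAddCommGroup H] [InnerProductSpace ℂ H]
    [CompleteSpace H] where
  proj : Set α → H →L[ℂ] H
  selfAdj : ∀ S, ContinuousLinearMap.adjoint (proj S) = proj S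
  inter : ∀ S T, proj S ∘L proj T = proj (S ∩ T)
  empty : proj ∅ = 0
  univ : proj Set.univ = 1
  countablyAdditive : ∀ f : ℕ → Set α, (Pairwise fun m n => Disjoint (f m) (f n)) →
    ∀ ψ : H, HasSum (fun n => proj (f n) ψ) (proj (⋃ n, f n) ψ)

/-- `U` finitely propagates with constant `b` with respect to the spectral measure `E`:
it maps the spectral subspace of `[R₁, R₂)` into that of `[R₁ - b, R₂ + b)`. -/
def FinitePropagation {H : Type*} [NormedAddCommGroup H] [InnerProductSpace ℂ H]
    [CompleteSpace H] (U : H →L[ℂ] H) (E : PVM ℝ H) (b : ℝ) : Prop :=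
  ∀ R₁ R₂ : ℝ, R₁ < R₂ → ∀ ψ : H, E.proj (Set.Ico R₁ R₂) ψ = ψ →
    E.proj (Set.Ico (R₁ - b) (R₂ + b)) (U ψ) = U ψ

/-- The truncated step operator `e^{Λ_N(A)} = Σ_{n=1}^N e^{δnb} E_A(B_n) + e^{δNb} E_A([Nb,∞))`,
where `B_n = [(n-1)b, nb)`. For `c = δ` this is `e^{Λ_N(A)}`, for `c = -δ` it is `e^{-Λ_N(A)}`. -/
def expLamN {H : Type*} [NormedAddCommGroup H] [InnerProductSpace ℂ H] [CompleteSpace H]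
    (E : PVM ℝ H) (c b : ℝ) (N : ℕ) : H →L[ℂ] H :=
  (∑ n ∈ Finset.Icc 1 N,
      Real.exp (c * n * b) • E.proj (Set.Ico (((n : ℝ) - 1) * b) ((n : ℝ) * b)))
    + Real.exp (c * N * b) • E.proj (Set.Ici ((N : ℝ) * b))

/-- `⌈x⌉_b := b ⋅ min {n ∈ ℕ : x ≤ n b}`. -/
def bceil (b x : ℝ) : ℝ := b * (⌈x / b⌉₊ : ℝ)

open Set
open scoped ComplexInnerProductSpace

theorem norm_sum_sq_eq_sum_norm_sq_of_inner_eq_zero {𝕜 E ι : Type*} [RCLike 𝕜]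
    [NormedAddCommGroup E] [InnerProductSpace 𝕜 E] (s : Finset ι) (g : ι → E)
    (h : (s : Set ι).Pairwise fun i j => inner 𝕜 (g i) (g j) = 0) :
    ‖∑ i ∈ s, g i‖ ^ 2 = ∑ i ∈ s, ‖g i‖ ^ 2 := by
  classical
  induction s using Finset.induction_on with
  | empty => simp
  | insert a s ha ih =>
    rw [Finset.coe_insert, pairwise_insert] at h
    have horth : inner 𝕜 (g a) (∑ j ∈ s, g j) = 0 := by
      rw [inner_sum]
      exact Finset.sum_eq_zero fun j hj => (h.2 j hj fun hja => ha (hja ▸ hj)).1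
    rw [Finset.sum_insert ha, Finset.sum_insert ha, sq, sq,
      norm_add_sq_eq_norm_sq_add_norm_sq_of_inner_eq_zero _ _ horth, ← sq, ← sq, ih h.1]

namespace PVM

variable {α H : Type*} [NormedAddCommGroup H] [InnerProductSpace ℂ H] [CompleteSpace H]
  (E : PVM α H)

lemma proj_proj_apply (S T : Set α) (ψ : H) :
    E.proj S (E.proj T ψ) = E.proj (S ∩ T) ψ := by
  rw [← E.inter]; rfl

lemma isStarProjection_proj (S : Set α) : IsStarProjection (E.proj S) where
  isIdempotentElem := by rw [IsIdempotentElem, ContinuousLinearMap.mul_def, E.inter, inter_self]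
  isSelfAdjoint := by rw [IsSelfAdjoint, ContinuousLinearMap.star_eq_adjoint, E.selfAdj]

lemma norm_proj_apply_le (S : Set α) (ψ : H) : ‖E.proj S ψ‖ ≤ ‖ψ‖ := by
  simpa using (E.proj S).le_of_opNorm_le ((E.isStarProjection_proj S).norm_le _) ψ

lemma inner_proj_proj_eq_zero {S T : Set α} (h : Disjoint S T) (ψ φ : H) :
    ⟪E.proj S ψ, E.proj T φ⟫ = 0 := by
  rw [← E.selfAdj T, ContinuousLinearMap.adjoint_inner_right, proj_proj_apply,
    h.symm.inter_eq, E.empty, zero_apply, inner_zero_left]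

lemma proj_union_apply {S T : Set α} (h : Disjoint S T) (ψ : H) :
    E.proj (S ∪ T) ψ = E.proj S ψ + E.proj T ψ := by
  let f : ℕ → Set α := fun n => if n = 0 then S else if n = 1 then T else ∅
  have hf : Pairwise fun m n => Disjoint (f m) (f n) := by
    intro m n hmn
    simp only [f]
    split_ifs <;> first | omega | exact h | exact h.symm | simp
  have hunion : (⋃ n, f n) = S ∪ T := by
    ext x
    simp only [mem_iUnion, mem_union, f]
    constructor
    · rintro ⟨n, hn⟩
      split_ifs at hn <;> simp_all
    · rintro (hx | hx)
      exacts [⟨0, by simpa using hx⟩, ⟨1, by simpa using hx⟩]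
  have hsum : HasSum (fun n => E.proj (f n) ψ) (∑ n ∈ Finset.range 2, E.proj (f n) ψ) :=
    hasSum_sum_of_ne_finset_zero fun n hn => by
      simp only [Finset.mem_range] at hn
      simp [f, show n ≠ 0 by omega, show n ≠ 1 by omega, E.empty]
  simpa [hunion, Finset.sum_range_succ, f] using (E.countablyAdditive f hf ψ).unique hsum

lemma proj_biUnion_apply {ι : Type*} (s : Finset ι) {f : ι → Set α}
    (hf : (s : Set ι).PairwiseDisjoint f) (ψ : H) :
    E.proj (⋃ i ∈ s, f i) ψ = ∑ i ∈ s, E.proj (f i) ψ := by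
  classical
  induction s using Finset.induction_on with
  | empty => simp [E.empty]
  | insert a s ha ih =>
    rw [Finset.coe_insert, pairwiseDisjoint_insert] at hf
    rw [Finset.set_biUnion_insert, E.proj_union_apply, ih hf.1, Finset.sum_insert ha]
    exact disjoint_iUnion₂_right.mpr fun j hj => hf.2 j hj fun hja => ha (hja ▸ hj)

lemma inter_nonempty_of_proj_apply_ne_zero {S T : Set α} {ψ : H} (hψ : E.proj T ψ = ψ)
    (h : E.proj S ψ ≠ 0) : (S ∩ T).Nonempty := by
  rw [nonempty_iff_ne_empty]
  rintro hST
  rw [← hψ, proj_proj_apply, hST, E.empty, zero_apply] at h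
  exact h rfl

lemma norm_sum_smul_proj_apply_le {ι : Type*} (s : Finset ι) {f : ι → Set α}
    (hf : (s : Set ι).PairwiseDisjoint f) (a : ι → ℝ) {M : ℝ} (hM : 0 ≤ M) (ψ : H)
    (ha : ∀ i ∈ s, E.proj (f i) ψ ≠ 0 → |a i| ≤ M) :
    ‖∑ i ∈ s, a i • E.proj (f i) ψ‖ ≤ M * ‖ψ‖ := by
  have hterm : ∀ i ∈ s, ‖a i • E.proj (f i) ψ‖ ^ 2 ≤ M ^ 2 * ‖E.proj (f i) ψ‖ ^ 2 := by
    intro i hi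
    by_cases h0 : E.proj (f i) ψ = 0
    · simp [h0]
    · rw [norm_smul, mul_pow]
      gcongr
      exact ha i hi h0
  have hsum : ∑ i ∈ s, ‖E.proj (f i) ψ‖ ^ 2 ≤ ‖ψ‖ ^ 2 := by
    rw [← norm_sum_sq_eq_sum_norm_sq_of_inner_eq_zero (𝕜 := ℂ) s _
      fun i hi j hj hij => E.inner_proj_proj_eq_zero (hf hi hj hij) ψ ψ,
      ← E.proj_biUnion_apply s hf]
    gcongr
    exact E.norm_proj_apply_le _ _
  have horth : (s : Set ι).Pairwise fun i j => ⟪a i • E.proj (f i) ψ, a j • E.proj (f j) ψ⟫ = 0 :=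
    fun i hi j hj hij => by
      simp only [← ContinuousLinearMap.map_smul_of_tower]
      exact E.inner_proj_proj_eq_zero (hf hi hj hij) _ _
  refine le_of_sq_le_sq ?_ (by positivity)
  calc ‖∑ i ∈ s, a i • E.proj (f i) ψ‖ ^ 2 = ∑ i ∈ s, ‖a i • E.proj (f i) ψ‖ ^ 2 :=
        norm_sum_sq_eq_sum_norm_sq_of_inner_eq_zero s _ horth
    _ ≤ ∑ i ∈ s, M ^ 2 * ‖E.proj (f i) ψ‖ ^ 2 := Finset.sum_le_sum hterm
    _ ≤ M ^ 2 * ‖ψ‖ ^ 2 := by rw [← Finset.mul_sum]; gcongr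
    _ = (M * ‖ψ‖) ^ 2 := by ring

end PVM

def stepSet (b : ℝ) (N n : ℕ) : Set ℝ :=
  if n ≤ N then Ico (((n : ℝ) - 1) * b) (n * b) else Ici (N * b)

lemma stepSet_subset_Ici {b : ℝ} {N n : ℕ} (hn : n ≤ N + 1) :
    stepSet b N n ⊆ Ici (((n : ℝ) - 1) * b) := by
  unfold stepSet
  split_ifs
  · exact Ico_subset_Ici_self
  · obtain rfl : n = N + 1 := by omega
    simp

lemma stepSet_subset_Iio {b : ℝ} {N n : ℕ} (hn : n ≤ N) : stepSet b N n ⊆ Iio (n * b) := by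
  simp [stepSet, hn, Ico_subset_Iio_self]

lemma pairwiseDisjoint_stepSet {b : ℝ} (hb : 0 ≤ b) (N : ℕ) :
    (Finset.Icc 1 (N + 1) : Set ℕ).PairwiseDisjoint (stepSet b N) := by
  have of_lt : ∀ i j : ℕ, i < j → j ≤ N + 1 → Disjoint (stepSet b N i) (stepSet b N j) :=
    fun i j hij hj => (Iio_disjoint_Ici (mul_le_mul_of_nonneg_right
      (by rw [le_sub_iff_add_le]; exact_mod_cast hij) hb)).mono
      (stepSet_subset_Iio (by omega)) (stepSet_subset_Ici hj)
  intro i hi j hj hij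
  simp only [Finset.coe_Icc, mem_Icc] at hi hj
  rcases hij.lt_or_gt with h | h
  exacts [of_lt i j h hj.2, (of_lt j i h hi.2).symm]

lemma expLamN_apply {H : Type*} [NormedAddCommGroup H] [InnerProductSpace ℂ H] [CompleteSpace H]
    (E : PVM ℝ H) (c b : ℝ) (N : ℕ) (ψ : H) :
    expLamN E c b N ψ = ∑ n ∈ Finset.Icc 1 (N + 1),
      Real.exp (c * (min n N : ℕ) * b) • E.proj (stepSet b N n) ψ := by
  rw [Finset.sum_Icc_succ_top (by omega), expLamN]
  simp only [add_apply, FunLike.coe_sum, Finset.sum_apply, smul_apply]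
  congr 1
  · refine Finset.sum_congr rfl fun n hn => ?_
    have hnN : n ≤ N := (Finset.mem_Icc.mp hn).2
    simp [stepSet, hnN]
  · simp [stepSet]

lemma natCast_mul_le_bceil {b x : ℝ} (hb : 0 < b) {n : ℕ} (h : ((n : ℝ) - 1) * b < x) :
    n * b ≤ bceil b x := by
  have hn : (n : ℝ) < ⌈x / b⌉₊ + 1 := by
    have := (lt_div_iff₀ hb).mpr h
    linarith [Nat.le_ceil (x / b)]
  rw [bceil, mul_comm b]
  gcongr
  exact_mod_cast Nat.lt_add_one_iff.mp (by exact_mod_cast hn)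

lemma norm_expLamN_apply_le {H : Type*} [NormedAddCommGroup H] [InnerProductSpace ℂ H]
    [CompleteSpace H] (E : PVM ℝ H) {δ b R : ℝ} (hδ : 0 ≤ δ) (hb : 0 < b) (N : ℕ) {ψ : H}
    (hψ : E.proj (Ico 0 R) ψ = ψ) :
    ‖expLamN E δ b N ψ‖ ≤ Real.exp (δ * bceil b R) * ‖ψ‖ := by
  rw [expLamN_apply]
  refine E.norm_sum_smul_proj_apply_le _ (pairwiseDisjoint_stepSet hb.le N) _
    (Real.exp_nonneg _) ψ fun n hn hne => ?_
  obtain ⟨x, hxn, hxR⟩ := E.inter_nonempty_of_proj_apply_ne_zero hψ hne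
  have hlow : ((n : ℝ) - 1) * b ≤ x := stepSet_subset_Ici (Finset.mem_Icc.mp hn).2 hxn
  rw [abs_of_pos (Real.exp_pos _), Real.exp_le_exp, mul_assoc]
  gcongr
  calc ((min n N : ℕ) : ℝ) * b ≤ n * b := by gcongr; exact min_le_left n N
    _ ≤ bceil b R := natCast_mul_le_bceil hb (hlow.trans_lt hxR.2)

theorem commutator_eq_of_add_eq_one {R : Type*} [Ring R] {p q : R} (h : q + p = 1) (u : R) :
    u * p - p * u = q * u * p - p * u * q := by
  obtain rfl : q = 1 - p := eq_sub_of_add_eq h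
  noncomm_ring

namespace PVM

variable {H : Type*} [NormedAddCommGroup H] [InnerProductSpace ℂ H] [CompleteSpace H]
  (E : PVM ℝ H)

lemma proj_Ico_add_proj_Ici (hpos : E.proj (Iio 0) = 0) {R : ℝ} (hR : 0 ≤ R) :
    E.proj (Ico 0 R) + E.proj (Ici R) = 1 := by
  ext ψ
  have hIci : E.proj (Ici 0) ψ = ψ := by
    have := E.proj_union_apply (Iio_disjoint_Ici (le_refl (0 : ℝ))) ψ
    rwa [Iio_union_Ici, E.univ, hpos, zero_apply, zero_add, eq_comm] at this
  rw [add_apply,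
    ← E.proj_union_apply ((Iio_disjoint_Ici le_rfl).mono_left Ico_subset_Iio_self),
    Ico_union_Ici_eq_Ici hR, hIci, one_apply_eq_self]

end PVM

lemma FinitePropagation.proj_Ico_proj_Ici_apply {H : Type*} [NormedAddCommGroup H]
    [InnerProductSpace ℂ H] [CompleteSpace H] {U : H →L[ℂ] H} {E : PVM ℝ H} {b : ℝ}
    (hprop : FinitePropagation U E b) {R : ℝ} (hR : 0 < R) (ψ : H) :
    E.proj (Ico 0 (R + b)) (E.proj (Ici R) (U (E.proj (Ico 0 R) ψ))) =
      E.proj (Ici R) (U (E.proj (Ico 0 R) ψ)) := by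
  have hψ := hprop 0 R hR (E.proj (Ico 0 R) ψ) (by rw [E.proj_proj_apply, inter_self])
  have hsets : Ico 0 (R + b) ∩ Ici R = Ici R ∩ Ico (0 - b) (R + b) := by
    ext x
    simp only [mem_inter_iff, mem_Ico, mem_Ici]
    constructor
    · rintro ⟨⟨-, hxb⟩, hxR⟩
      exact ⟨hxR, by linarith, hxb⟩
    · rintro ⟨hxR, -, hxb⟩
      exact ⟨⟨by linarith, hxb⟩, hxR⟩
  rw [E.proj_proj_apply, hsets, ← E.proj_proj_apply, hψ]

/-- Since the commutator has spectral support in a bounded set, boundedness of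
`e^{Λ(A)}[U, E_A([R,∞))]` is expressed as a bound on `e^{Λ_N(A)}[U, E_A([R,∞))]` uniform in `N`. -/
theorem stmt2 {H : Type*} [NormedAddCommGroup H] [InnerProductSpace ℂ H] [CompleteSpace H]
    (U : H →L[ℂ] H) (hU : U ∈ unitary (H →L[ℂ] H))
    (E : PVM ℝ H) (hpos : E.proj (Set.Iio 0) = 0)
    (b : ℝ) (hb : 0 < b) (hprop : FinitePropagation U E b)
    (δ : ℝ) (hδ : 0 < δ) (R : ℝ) (hR : 0 < R) :
    ∀ (N : ℕ) (ψ : H),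
      ‖expLamN E δ b N ((U ∘L E.proj (Set.Ici R) - E.proj (Set.Ici R) ∘L U) ψ)‖ ≤
        (Real.exp (δ * bceil b (R + b)) + Real.exp (δ * bceil b R)) * ‖ψ‖ := by
  intro N ψ
  set P := E.proj (Ici R)
  set Q := E.proj (Ico 0 R)
  have hcomm : (U ∘L P - P ∘L U) ψ = Q (U (P ψ)) - P (U (Q ψ)) :=
    congrArg (· ψ) (commutator_eq_of_add_eq_one (E.proj_Ico_add_proj_Ici hpos hR.le) U)
  have hnorm : ∀ S T, ‖E.proj S (U (E.proj T ψ))‖ ≤ ‖ψ‖ := fun S T =>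
    (E.norm_proj_apply_le _ _).trans <|
      (ContinuousLinearMap.norm_map_of_mem_unitary hU _).trans_le (E.norm_proj_apply_le _ _)
  rw [hcomm, map_sub]
  calc _ ≤ ‖expLamN E δ b N (Q (U (P ψ)))‖ + ‖expLamN E δ b N (P (U (Q ψ)))‖ := norm_sub_le _ _
    _ ≤ Real.exp (δ * bceil b R) * ‖ψ‖ + Real.exp (δ * bceil b (R + b)) * ‖ψ‖ := by
      gcongr
      · exact (norm_expLamN_apply_le E hδ.le hb N (by rw [E.proj_proj_apply, inter_self])).trans
          (by gcongr; exact hnorm _ _)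
      · exact (norm_expLamN_apply_le E hδ.le hb N (hprop.proj_Ico_proj_Ici_apply hR ψ)).trans
          (by gcongr; exact hnorm _ _)
    _ = _ := by ring
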